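/- For elements x, y, z in a Coxeter group W, the following are equivalent: (1) z ≤ x * y; (2) z ◁ y⁻¹ ≤ x; (3) x⁻¹ ▷ z ≤ y. Here * is the Demazure product, ◁ and ▷ are the downwards Demazure products. -/

import Mathlib

/-- The Bruhat order on a Coxeter group, defined via the subword property:
`u ≤ v` iff some reduced word for `v` contains a subword whose product is `u`. -/
def bruhatLE {B W : Type*} [Group W] {M : CoxeterMatrix B} (cs : CoxeterSystem M W)
    (u v : W) : Prop :=
  ∃ l : List B, cs.IsReduced l ∧ cs.wordProd l = v ∧
    ∃ l' : List B, l'.Sublist l ∧ cs.wordProd l' = u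

/-!
If `a ≤ x`, then `z = a v⁻¹` with `v⁻¹ ≤ y`, so `z ≤ m` by maximality of `m`; likewise if
`b ≤ y`. Conversely, if `z ≤ m = u v` with `u ≤ x` and `v ≤ y`, the subword property applied
to the concatenation of reduced words for `u` and `v` writes `z = u' v'` with `u' ≤ u` and
`v' ≤ v`, and minimality gives `a ≤ z v'⁻¹ = u' ≤ x` and `b ≤ u'⁻¹ z = v' ≤ y`.

That concatenation need not be reduced, and transitivity of the subword order is not obvious
either. Both come from comparing the subword order with the chain order generated by
`w t < w` for reflections `t` with `ℓ (w t) < ℓ w`, which in turn rests on the strong exchange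
condition. That is proved with Tits' action of `W` on `W × ZMod 2`, in which `s i` sends
`(t, ε)` to `(s i t s i, ε + [t = s i])`: it shows that the parity of the number of occurrences
of a reflection `t` in the left inversion sequence of a word depends only on the product `w` of
the word, and equals `1` whenever `ℓ (t w) < ℓ w`.
-/

theorem mul_mul_inv_eq_iff_eq_inv_mul_mul {G : Type*} [Group G] {g t x : G} :
    g * t * g⁻¹ = x ↔ t = g⁻¹ * x * g := by
  constructor <;> rintro rfl <;> group

namespace CoxeterSystem

open List

variable {B W : Type*} [Group W] {M : CoxeterMatrix B} (cs : CoxeterSystem M W)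

local prefix:100 "s " => cs.simple
local prefix:100 "π " => cs.wordProd
local prefix:100 "ℓ " => cs.length
local prefix:100 "lis " => cs.leftInvSeq
local prefix:100 "ris " => cs.rightInvSeq

theorem simple_mul_mul_simple_eq_iff {i : B} {t x : W} :
    s i * t * s i = x ↔ t = s i * x * s i := by
  simpa using mul_mul_inv_eq_iff_eq_inv_mul_mul (g := s i) (t := t) (x := x)

section TitsRepresentation

variable [DecidableEq W]

def titsPerm (i : B) : Equiv.Perm (W × ZMod 2) :=
  Function.Involutive.toPerm (fun p => (s i * p.1 * s i, p.2 + if p.1 = s i then 1 else 0))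
    fun ⟨t, ε⟩ => by
      simp only [simple_mul_mul_simple_eq_iff, add_assoc, Prod.mk.injEq]
      refine ⟨by simp, ?_⟩
      simp only [one_mul, simple_mul_simple_self, add_eq_left]
      exact CharTwo.add_self_eq_zero _

theorem titsPerm_apply (i : B) (t : W) (ε : ZMod 2) :
    cs.titsPerm i (t, ε) = (s i * t * s i, ε + if t = s i then 1 else 0) := rfl

theorem titsPerm_mul_pow_apply (i j : B) (k : ℕ) (t : W) (ε : ZMod 2) :
    ((cs.titsPerm i * cs.titsPerm j) ^ k) (t, ε) =
      ((s i * s j) ^ k * t * ((s i * s j) ^ k)⁻¹,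
        ε + ∑ n ∈ Finset.range (2 * k), if t = s j * (s i * s j) ^ n then 1 else 0) := by
  set g := s i * s j with hg
  clear_value g
  induction k generalizing t ε with
  | zero => simp
  | succ k ih =>
    have hconj : s i * (s j * t * s j) * s i = g * t * g⁻¹ := by simp [hg, mul_assoc]
    have hshift (n : ℕ) : g * t * g⁻¹ = s j * g ^ n ↔ t = s j * g ^ (n + 2) := by
      have : g⁻¹ * s j = s j * g := by simp [hg, mul_assoc]
      rw [mul_mul_inv_eq_iff_eq_inv_mul_mul, ← mul_assoc, this, mul_assoc, mul_assoc, ← pow_succ,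
        ← pow_succ']
    have hsecond : s j * t * s j = s i ↔ t = s j * g ^ 1 := by
      rw [simple_mul_mul_simple_eq_iff, pow_one, hg, mul_assoc]
    rw [pow_succ, Equiv.Perm.mul_apply, Equiv.Perm.mul_apply, titsPerm_apply, titsPerm_apply,
      hconj, ih, mul_add, Finset.sum_range_succ', Finset.sum_range_succ']
    simp only [hshift, hsecond, pow_zero, mul_one, Prod.mk.injEq]
    refine ⟨by group, by ring⟩

theorem isLiftable_titsPerm : M.IsLiftable cs.titsPerm := by
  intro i j
  ext ⟨t, ε⟩ : 1
  -- the `n`-th and `(n + M i j)`-th summands agree, so the sum over `2 * M i j` terms vanishes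
  have hsum : ∑ n ∈ Finset.range (2 * M i j),
      (if t = s j * (s i * s j) ^ n then 1 else 0 : ZMod 2) = 0 := by
    simp only [two_mul, Finset.sum_range_add, pow_add, simple_mul_simple_pow, one_mul]
    exact CharTwo.add_self_eq_zero _
  simp [titsPerm_mul_pow_apply, simple_mul_simple_pow, hsum]

def titsRep : W →* Equiv.Perm (W × ZMod 2) := cs.lift ⟨cs.titsPerm, cs.isLiftable_titsPerm⟩

theorem titsRep_simple (i : B) : cs.titsRep (s i) = cs.titsPerm i :=
  cs.lift_apply_simple cs.isLiftable_titsPerm i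

theorem titsRep_wordProd_apply (ω : List B) (t : W) (ε : ZMod 2) :
    cs.titsRep (π ω) ((π ω)⁻¹ * t * π ω, ε) = (t, ε + (lis ω).count t) := by
  induction ω generalizing t ε with
  | nil => simp
  | cons i ω ih =>
    have hcount :
        (lis (i :: ω)).count t = (lis ω).count (s i * t * s i) + if t = s i then 1 else 0 := by
      rw [leftInvSeq, count_cons,
        ← count_map_of_injective _ _ (MulAut.conj (s i)).injective (s i * t * s i)]
      have hconj : s i * (s i * t * s i) * (s i)⁻¹ = t := by simp [mul_assoc]
      simp only [MulAut.conj_apply, hconj, beq_iff_eq, @eq_comm _ (s i) t]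
    rw [wordProd_cons, map_mul, Equiv.Perm.mul_apply, mul_inv_rev, inv_simple,
      show (π ω)⁻¹ * s i * t * (s i * π ω) = (π ω)⁻¹ * (s i * t * s i) * π ω by group, ih,
      titsRep_simple, titsPerm_apply, hcount]
    simp only [simple_mul_mul_simple_eq_iff, Nat.cast_add, Nat.cast_ite, Nat.cast_one,
      Nat.cast_zero]
    simp [add_assoc, mul_assoc]

def inversionParity (w t : W) : ZMod 2 := (cs.titsRep w (w⁻¹ * t * w, 0)).2

theorem inversionParity_wordProd (ω : List B) (t : W) :
    cs.inversionParity (π ω) t = (lis ω).count t := by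
  simp [inversionParity, titsRep_wordProd_apply]

theorem titsRep_apply (w t : W) (ε : ZMod 2) :
    cs.titsRep w (w⁻¹ * t * w, ε) = (t, ε + cs.inversionParity w t) := by
  obtain ⟨ω, rfl⟩ := cs.wordProd_surjective w
  rw [inversionParity_wordProd, titsRep_wordProd_apply]

theorem inversionParity_mul (u v t : W) :
    cs.inversionParity (u * v) t =
      cs.inversionParity u t + cs.inversionParity v (u⁻¹ * t * u) := by
  have h := cs.titsRep_apply (u * v) t 0
  rw [map_mul, Equiv.Perm.mul_apply,
    show (u * v)⁻¹ * t * (u * v) = v⁻¹ * (u⁻¹ * t * u) * v by group, titsRep_apply,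
    titsRep_apply, Prod.mk.injEq] at h
  linear_combination -h.2

theorem inversionParity_inv (w t : W) :
    cs.inversionParity w⁻¹ (w⁻¹ * t * w) = cs.inversionParity w t := by
  have h := cs.inversionParity_mul w w⁻¹ t
  rw [mul_inv_cancel, inversionParity, map_one, Equiv.Perm.one_apply, eq_comm,
    CharTwo.add_eq_zero] at h
  exact h.symm

theorem inversionParity_self_of_isReflection {t : W} (ht : cs.IsReflection t) :
    cs.inversionParity t t = 1 := by
  obtain ⟨r, i, rfl⟩ := ht
  have hsimple : cs.inversionParity (s i) (s i) = 1 := by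
    simpa using cs.inversionParity_wordProd [i] (s i)
  have hconj : r⁻¹ * (r * s i * r⁻¹) * r = s i := by group
  have hr := cs.inversionParity_inv r (r * s i * r⁻¹)
  have hsr := cs.inversionParity_mul (s i) r⁻¹ (s i)
  rw [hconj] at hr
  rw [inv_simple, simple_mul_simple_self, one_mul, hsimple, hr] at hsr
  calc cs.inversionParity (r * s i * r⁻¹) (r * s i * r⁻¹)
      = cs.inversionParity (r * (s i * r⁻¹)) (r * s i * r⁻¹) := by rw [mul_assoc r]
    _ = 1 := by
      rw [inversionParity_mul, hconj, hsr, add_left_comm, CharTwo.add_self_eq_zero, add_zero]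

theorem inversionParity_eq_one_of_isLeftInversion {w t : W} (h : cs.IsLeftInversion w t) :
    cs.inversionParity w t = 1 := by
  obtain ⟨ht, hlt⟩ := h
  obtain ⟨ω, hω, hω'⟩ := cs.exists_isReduced (t * w)
  have hnot : t ∉ lis ω := fun hmem =>
    ht.isLeftInversion_mul_right_iff.mp (hω' ▸ cs.isLeftInversion_of_mem_leftInvSeq hω hmem)
      ⟨ht, hlt⟩
  have hzero : cs.inversionParity (t * w) t = 0 := by
    rw [hω', inversionParity_wordProd, count_eq_zero.mpr hnot, Nat.cast_zero]
  calc cs.inversionParity w t = cs.inversionParity (t * (t * w)) t := by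
        rw [← mul_assoc, ht.mul_self, one_mul]
    _ = 1 := by
      rw [inversionParity_mul, ht.inv, ht.mul_self, one_mul, hzero,
        cs.inversionParity_self_of_isReflection ht, add_zero]

end TitsRepresentation

theorem mem_leftInvSeq_of_isLeftInversion {ω : List B} {t : W}
    (h : cs.IsLeftInversion (π ω) t) : t ∈ lis ω := by
  classical
  have hparity := cs.inversionParity_eq_one_of_isLeftInversion h
  rw [inversionParity_wordProd] at hparity
  refine count_pos_iff.mp (Nat.pos_of_ne_zero fun hzero => ?_)
  simp [hzero] at hparity

theorem mem_rightInvSeq_of_isRightInversion {ω : List B} {t : W}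
    (h : cs.IsRightInversion (π ω) t) : t ∈ ris ω := by
  have hrev : t ∈ lis ω.reverse :=
    cs.mem_leftInvSeq_of_isLeftInversion (by rwa [wordProd_reverse, isLeftInversion_inv_iff])
  rwa [leftInvSeq_reverse, mem_reverse] at hrev

theorem exists_wordProd_eraseIdx_eq_mul {ω : List B} {t : W} (h : cs.IsRightInversion (π ω) t) :
    ∃ j < ω.length, π (ω.eraseIdx j) = π ω * t := by
  obtain ⟨j, hj, rfl⟩ := mem_iff_getElem.mp (cs.mem_rightInvSeq_of_isRightInversion h)
  refine ⟨j, by simpa using hj, ?_⟩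
  rw [← getD_eq_getElem _ 1 hj, wordProd_mul_getD_rightInvSeq]

def BruhatStep (u v : W) : Prop := ∃ t, cs.IsRightInversion v t ∧ u = v * t

abbrev BruhatChainLE : W → W → Prop := Relation.ReflTransGen cs.BruhatStep

theorem bruhatStep_of_isReduced_cons {i : B} {ρ : List B} (h : cs.IsReduced (i :: ρ)) :
    cs.BruhatStep (π ρ) (s i * π ρ) := by
  have hlt : ℓ (π ρ) < ℓ (s i * π ρ) := by
    rw [← wordProd_cons, h.eq, length_cons, Nat.lt_succ_iff]
    exact cs.length_wordProd_le ρ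
  exact ⟨(π ρ)⁻¹ * s i * π ρ, ⟨⟨(π ρ)⁻¹, i, by simp⟩, by simpa [mul_assoc] using hlt⟩,
    by simp [mul_assoc]⟩

theorem bruhatChainLE_simple_mul_or_of_bruhatStep {u w : W} (h : cs.BruhatStep u w) (i : B) :
    cs.BruhatChainLE (s i * u) w ∨ cs.BruhatChainLE (s i * u) (s i * w) := by
  obtain ⟨t, ⟨ht, hlt⟩, rfl⟩ := h
  rcases (ht.length_mul_left_ne (s i * w)).lt_or_gt with hdown | hup
  · exact .inr (.single ⟨t, ⟨ht, hdown⟩, (mul_assoc _ _ _).symm⟩)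
  · left
    -- `w * t` deletes a letter from the word `i :: ρ` for `w`; deleting any letter but the
    -- first would make `s i * w * t` shorter than `s i * w`
    obtain ⟨ρ, hρ, hρw⟩ := cs.exists_isReduced (s i * w)
    have hw : π (i :: ρ) = w := by rw [wordProd_cons, ← hρw, simple_mul_simple_cancel_left]
    obtain ⟨j, hj, hjt⟩ :=
      cs.exists_wordProd_eraseIdx_eq_mul (ω := i :: ρ) (t := t) (hw ▸ ⟨ht, hlt⟩)
    rw [hw] at hjt
    cases j with
    | zero =>
      rw [eraseIdx_cons_zero, ← hρw] at hjt
      rw [← hjt, simple_mul_simple_cancel_left]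
    | succ j =>
      exfalso
      have hjρ : j < ρ.length := by simpa using hj
      have hshort : s i * w * t = π (ρ.eraseIdx j) := by
        rw [mul_assoc, ← hjt, eraseIdx_cons_succ, wordProd_cons, simple_mul_simple_cancel_left]
      have hle := cs.length_wordProd_le (ρ.eraseIdx j)
      rw [length_eraseIdx_of_lt hjρ, ← hshort] at hle
      have hρlen : ℓ (s i * w) = ρ.length := hρw ▸ hρ
      omega

theorem bruhatChainLE_simple_mul_or {u w : W} (h : cs.BruhatChainLE u w) (i : B) :
    cs.BruhatChainLE (s i * u) w ∨ cs.BruhatChainLE (s i * u) (s i * w) := by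
  induction h with
  | refl => exact .inr .refl
  | tail _ hstep ih =>
    rcases ih with h | h
    · exact .inl (h.tail hstep)
    · exact (cs.bruhatChainLE_simple_mul_or_of_bruhatStep hstep i).imp h.trans h.trans

theorem bruhatChainLE_of_sublist {ω' ω : List B} (h : ω' <+ ω) (hω : cs.IsReduced ω) :
    cs.BruhatChainLE (π ω') (π ω) := by
  induction h with
  | slnil => exact .refl
  | @cons _ ρ i _ ih =>
    rw [wordProd_cons]
    exact (ih (by simpa using hω.drop 1)).tail (cs.bruhatStep_of_isReduced_cons hω)
  | @cons_cons κ ρ i _ ih =>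
    simp only [wordProd_cons]
    exact (cs.bruhatChainLE_simple_mul_or (ih (by simpa using hω.drop 1)) i).elim
      (fun h => h.tail (cs.bruhatStep_of_isReduced_cons hω)) id

theorem exists_sublist_of_bruhatChainLE {u v : W} (h : cs.BruhatChainLE u v) {ω : List B}
    (hω : π ω = v) : ∃ ω', ω' <+ ω ∧ π ω' = u := by
  induction h using Relation.ReflTransGen.head_induction_on with
  | refl => exact ⟨ω, .refl ω, hω⟩
  | head hstep _ ih =>
    obtain ⟨ωc, hsub, rfl⟩ := ih
    obtain ⟨t, ht, rfl⟩ := hstep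
    obtain ⟨j, -, hj⟩ := cs.exists_wordProd_eraseIdx_eq_mul ht
    exact ⟨ωc.eraseIdx j, (eraseIdx_sublist ωc j).trans hsub, hj⟩

theorem bruhatLE_iff_bruhatChainLE {u v : W} : bruhatLE cs u v ↔ cs.BruhatChainLE u v := by
  constructor
  · rintro ⟨ω, hω, rfl, ω', hsub, rfl⟩
    exact cs.bruhatChainLE_of_sublist hsub hω
  · intro h
    obtain ⟨ω, hω, rfl⟩ := cs.exists_isReduced v
    obtain ⟨ω', hsub, rfl⟩ := cs.exists_sublist_of_bruhatChainLE h rfl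
    exact ⟨ω, hω, rfl, ω', hsub, rfl⟩

theorem bruhatLE_trans {u v w : W} (huv : bruhatLE cs u v) (hvw : bruhatLE cs v w) :
    bruhatLE cs u w := by
  rw [bruhatLE_iff_bruhatChainLE] at *
  exact huv.trans hvw

theorem bruhatLE_inv {u v : W} (h : bruhatLE cs u v) : bruhatLE cs u⁻¹ v⁻¹ := by
  obtain ⟨ω, hω, rfl, ω', hsub, rfl⟩ := h
  exact ⟨ω.reverse, hω.reverse, wordProd_reverse _ _, ω'.reverse, hsub.reverse,
    wordProd_reverse _ _⟩

theorem exists_bruhatLE_mul_eq_of_bruhatLE_mul {z u v : W} (h : bruhatLE cs z (u * v)) :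
    ∃ u' v', bruhatLE cs u' u ∧ bruhatLE cs v' v ∧ z = u' * v' := by
  obtain ⟨ωu, hωu, rfl⟩ := cs.exists_isReduced u
  obtain ⟨ωv, hωv, rfl⟩ := cs.exists_isReduced v
  obtain ⟨ω', hsub, rfl⟩ := cs.exists_sublist_of_bruhatChainLE
    (cs.bruhatLE_iff_bruhatChainLE.mp h) (cs.wordProd_append ωu ωv)
  obtain ⟨ω₁, ω₂, rfl, h₁, h₂⟩ := sublist_append_iff.mp hsub
  exact ⟨π ω₁, π ω₂, ⟨ωu, hωu, rfl, ω₁, h₁, rfl⟩, ⟨ωv, hωv, rfl, ω₂, h₂, rfl⟩,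
    cs.wordProd_append ω₁ ω₂⟩

end CoxeterSystem

/-- For `x, y, z` in a Coxeter group: `z ≤ x * y` iff `z ◁ y⁻¹ ≤ x` iff
`x⁻¹ ▷ z ≤ y`, where `x * y = max {uv : u ≤ x, v ≤ y}`,
`z ◁ y⁻¹ = min {zv : v ≤ y⁻¹}` and `x⁻¹ ▷ z = min {uz : u ≤ x⁻¹}`. -/
theorem demazure_product_adjunction {B W : Type*} [Group W] {M : CoxeterMatrix B}
    (cs : CoxeterSystem M W) (x y z m a b : W)
    (hmem : ∃ u v : W, bruhatLE cs u x ∧ bruhatLE cs v y ∧ m = u * v)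
    (hmax : ∀ w : W, (∃ u v : W, bruhatLE cs u x ∧ bruhatLE cs v y ∧ w = u * v) →
      bruhatLE cs w m)
    (hamem : ∃ v : W, bruhatLE cs v y⁻¹ ∧ a = z * v)
    (hamin : ∀ w : W, (∃ v : W, bruhatLE cs v y⁻¹ ∧ w = z * v) → bruhatLE cs a w)
    (hbmem : ∃ u : W, bruhatLE cs u x⁻¹ ∧ b = u * z)
    (hbmin : ∀ w : W, (∃ u : W, bruhatLE cs u x⁻¹ ∧ w = u * z) → bruhatLE cs b w) :
    (bruhatLE cs z m ↔ bruhatLE cs a x) ∧ (bruhatLE cs a x ↔ bruhatLE cs b y) := by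
  have hforward : bruhatLE cs z m → bruhatLE cs a x ∧ bruhatLE cs b y := by
    intro hz
    obtain ⟨u, v, hux, hvy, rfl⟩ := hmem
    obtain ⟨u', v', hu', hv', rfl⟩ := cs.exists_bruhatLE_mul_eq_of_bruhatLE_mul hz
    have hu'x := cs.bruhatLE_trans hu' hux
    have hv'y := cs.bruhatLE_trans hv' hvy
    exact ⟨cs.bruhatLE_trans (hamin u' ⟨v'⁻¹, cs.bruhatLE_inv hv'y, by group⟩) hu'x,
      cs.bruhatLE_trans (hbmin v' ⟨u'⁻¹, cs.bruhatLE_inv hu'x, by group⟩) hv'y⟩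
  have hax : bruhatLE cs a x → bruhatLE cs z m := by
    obtain ⟨v, hv, rfl⟩ := hamem
    exact fun hax => hmax z ⟨z * v, v⁻¹, hax, by simpa using cs.bruhatLE_inv hv, by group⟩
  have hby : bruhatLE cs b y → bruhatLE cs z m := by
    obtain ⟨u, hu, rfl⟩ := hbmem
    exact fun hby => hmax z ⟨u⁻¹, u * z, by simpa using cs.bruhatLE_inv hu, hby, by group⟩
  exact ⟨⟨fun h => (hforward h).1, hax⟩,
    ⟨fun h => (hforward (hax h)).2, fun h => (hforward (hby h)).1⟩⟩
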